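/- For natural numbers n and r with r ≤ n, the polynomial f_n^{(r)}(x) = r! Σ_{k=r}^n C(n,k) S(k,r) B_{n−k}(x) has only real zeros, where S(k,r) are Stirling numbers of the second kind and B_m(x) are Bell polynomials; moreover Σ_{n≥0} f_n^{(r)}(x) t^n/n! = (e^t − 1)^r exp(x(e^t − 1)). -/

import Mathlib

/-!
The Bell polynomials satisfy `B_{m+1} = X (B_m + B_m')`, and `f_n^{(r)}` is the `r`-th derivative
of `B_n`. Both `P ↦ P + P'` and `P ↦ P'` (for nonconstant `P`) preserve real-rootedness: at a
non-real `z` the logarithmic derivative `P'(z)/P(z) = ∑ 1/(z - a)`, summed over the real roots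
`a`, has nonzero imaginary part, so it is neither `-1` nor `0`.

Everything else comes from `[t^m] (e^t - 1)^k = k! S(m,k) / m!`: comparing coefficients in
`(e^t - 1)^r (e^t - 1)^j = (e^t - 1)^(r+j)` identifies the coefficients of `f_n^{(r)}` with those
of `B_n^{(r)}`, and the generating function is a Cauchy product.
-/

/-- A real polynomial has only real zeros: every complex root has imaginary part zero. -/
def RZ (p : Polynomial ℝ) : Prop :=
  ∀ z : ℂ, (p.map (algebraMap ℝ ℂ)).IsRoot z → z.im = 0

/-- Stirling numbers of the second kind. -/
def stirling2 : ℕ → ℕ → ℕ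
  | 0, 0 => 1
  | 0, _ + 1 => 0
  | _ + 1, 0 => 0
  | n + 1, k + 1 => (k + 1) * stirling2 n (k + 1) + stirling2 n k

/-- The Bell polynomial `B_m(x) = ∑_k S(m,k) x^k`. -/
noncomputable def bellPoly (m : ℕ) : Polynomial ℝ :=
  ∑ k ∈ Finset.range (m + 1), Polynomial.C (stirling2 m k : ℝ) * Polynomial.X ^ k

/-- `f_n^{(r)}(x) = r! ∑_{k=r}^n C(n,k) S(k,r) B_{n−k}(x)`. -/
noncomputable def fPoly (n r : ℕ) : Polynomial ℝ :=
  Polynomial.C (r.factorial : ℝ) *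
    ∑ k ∈ Finset.Icc r n,
      Polynomial.C ((n.choose k : ℝ) * (stirling2 k r : ℝ)) * bellPoly (n - k)

/-- The formal power series `e^t − 1`. -/
noncomputable def expm1 : PowerSeries ℝ :=
  PowerSeries.mk fun j => if j = 0 then 0 else 1 / (j.factorial : ℝ)

section Bell

open Nat Polynomial

theorem stirling2_eq_stirlingSecond : stirling2 = stirlingSecond := by
  funext n k
  induction n generalizing k with
  | zero => cases k <;> rfl
  | succ n ih =>
    cases k with
    | zero => rfl
    | succ k => rw [stirling2, stirlingSecond_succ_succ, ih, ih]

theorem coeff_bellPoly (m j : ℕ) : (bellPoly m).coeff j = stirlingSecond m j := by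
  rw [bellPoly, finsetSum_coeff, stirling2_eq_stirlingSecond]
  simp only [coeff_C_mul, coeff_X_pow, mul_ite, mul_one, mul_zero]
  rw [Finset.sum_ite_eq]
  split_ifs with hj
  · rfl
  · rw [Finset.mem_range, not_lt] at hj
    rw [stirlingSecond_eq_zero_of_lt hj, cast_zero]

theorem bellPoly_zero : bellPoly 0 = 1 := by
  ext j
  rw [coeff_bellPoly, coeff_one]
  cases j <;> simp

theorem natDegree_bellPoly (m : ℕ) : (bellPoly m).natDegree = m :=
  natDegree_eq_of_le_of_coeff_ne_zero
    (natDegree_le_iff_coeff_eq_zero.2 fun j hj => by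
      rw [coeff_bellPoly, stirlingSecond_eq_zero_of_lt (by exact_mod_cast hj), cast_zero])
    (by simp [coeff_bellPoly, stirlingSecond_self])

theorem bellPoly_succ (m : ℕ) :
    bellPoly (m + 1) = X * (bellPoly m + derivative (bellPoly m)) := by
  ext (_ | j)
  · simp [coeff_bellPoly]
  · rw [coeff_X_mul, coeff_add, coeff_derivative, coeff_bellPoly, coeff_bellPoly, coeff_bellPoly,
      stirlingSecond_succ_succ]
    push_cast
    ring

end Bell

section RealRooted

open Polynomial

theorem Complex.im_sum_one_div_sub_ne_zero {s : Multiset ℂ} (hs : s ≠ 0)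
    (hs_real : ∀ a ∈ s, a.im = 0) {z : ℂ} (hz : z.im ≠ 0) :
    (s.map fun a => 1 / (z - a)).sum.im ≠ 0 := by
  have hterm : ∀ a ∈ s, z.im * (1 / (z - a)).im < 0 := by
    intro a ha
    have hza : z - a ≠ 0 := fun h => hz (by simpa [hs_real a ha] using congrArg im h)
    rw [one_div, inv_im, sub_im, hs_real a ha, sub_zero, mul_div_assoc', mul_neg]
    exact div_neg_of_neg_of_pos (neg_neg_of_pos (mul_self_pos.2 hz)) (normSq_pos.2 hza)
  have hsum : z.im * (s.map fun a => 1 / (z - a)).sum.im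
      = (s.map fun a => z.im * (1 / (z - a)).im).sum := by
    rw [Multiset.sum_map_mul_left]
    exact congrArg _ ((map_multiset_sum imAddGroupHom _).trans (by rw [Multiset.map_map]; rfl))
  intro h
  have := Multiset.sum_lt_sum_of_nonempty hs hterm
  rw [← hsum, h] at this
  simp at this

theorem Polynomial.natDegree_iterate_derivative_eq {R : Type*} [Semiring R] [IsAddTorsionFree R]
    (p : R[X]) (r : ℕ) : (derivative^[r] p).natDegree = p.natDegree - r := by
  induction r with
  | zero => rfl
  | succ r ih => rw [Function.iterate_succ_apply', natDegree_derivative, ih, Nat.sub_sub]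

namespace RZ

variable {p : ℝ[X]}

theorem eval_ne_zero (hp : RZ p) {z : ℂ} (hz : z.im ≠ 0) :
    (p.map (algebraMap ℝ ℂ)).eval z ≠ 0 :=
  fun h => hz (hp z h)

theorem im_eval_derivative_div_eval_ne_zero (hp : RZ p) (hdeg : p.natDegree ≠ 0) {z : ℂ}
    (hz : z.im ≠ 0) :
    ((p.map (algebraMap ℝ ℂ)).derivative.eval z /
      (p.map (algebraMap ℝ ℂ)).eval z).im ≠ 0 := by
  have hsplit := IsAlgClosed.splits (p.map (algebraMap ℝ ℂ))
  rw [hsplit.eval_derivative_div_eval_of_ne_zero (hp.eval_ne_zero hz)]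
  refine Complex.im_sum_one_div_sub_ne_zero ?_ (fun a ha => hp a (isRoot_of_mem_roots ha)) hz
  exact hsplit.roots_ne_zero (by rwa [natDegree_map])

protected theorem derivative (hp : RZ p) (hdeg : p.natDegree ≠ 0) : RZ (derivative p) := by
  intro z hz
  by_contra him
  apply hp.im_eval_derivative_div_eval_ne_zero hdeg him
  rw [derivative_map, hz.eq_zero, zero_div, Complex.zero_im]

theorem add_derivative (hp : RZ p) : RZ (p + derivative p) := by
  rcases eq_or_ne p.natDegree 0 with hdeg | hdeg
  · rwa [derivative_of_natDegree_zero hdeg, add_zero]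
  intro z hz
  by_contra him
  apply hp.im_eval_derivative_div_eval_ne_zero hdeg him
  have hsum :
      (p.map (algebraMap ℝ ℂ)).eval z + (p.map (algebraMap ℝ ℂ)).derivative.eval z = 0 := by
    rwa [derivative_map, ← eval_add, ← Polynomial.map_add]
  rw [eq_neg_of_add_eq_zero_right hsum, neg_div, div_self (hp.eval_ne_zero him)]
  simp

theorem X_mul (hp : RZ p) : RZ (X * p) := by
  intro z hz
  rw [Polynomial.map_mul, map_X, IsRoot, eval_mul, eval_X, mul_eq_zero] at hz
  rcases hz with rfl | hz
  · rfl
  · exact hp z hz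

theorem iterate_derivative (hp : RZ p) {r : ℕ} (hr : r ≤ p.natDegree) :
    RZ (derivative^[r] p) := by
  induction r with
  | zero => exact hp
  | succ r ih =>
    rw [Function.iterate_succ_apply']
    refine (ih (by omega)).derivative ?_
    rw [natDegree_iterate_derivative_eq]
    omega

end RZ

theorem rz_bellPoly (m : ℕ) : RZ (bellPoly m) := by
  induction m with
  | zero =>
    rw [bellPoly_zero]
    intro z hz
    simp at hz
  | succ m ih =>
    rw [bellPoly_succ]
    exact ih.add_derivative.X_mul

end RealRooted

section ExpGeneratingFunction

open Nat PowerSeries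

theorem expm1_eq : expm1 = exp ℝ - 1 := by
  ext (_ | j) <;> simp [expm1, coeff_exp]

theorem derivative_expm1 : d⁄dX ℝ expm1 = expm1 + 1 := by
  rw [expm1_eq, map_sub, derivative_exp, derivative_one, sub_zero, sub_add_cancel]

theorem coeff_expm1_pow (k m : ℕ) :
    coeff m (expm1 ^ k) = k ! * stirlingSecond m k / m ! := by
  induction m generalizing k with
  | zero => cases k <;> simp [expm1_eq]
  | succ m ih =>
    cases k with
    | zero => simp [coeff_one]
    | succ k =>
      have hderiv :
          d⁄dX ℝ (expm1 ^ (k + 1)) = C (k + 1 : ℝ) * (expm1 ^ (k + 1) + expm1 ^ k) := by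
        rw [derivative_pow, derivative_expm1, add_tsub_cancel_right, ← Nat.cast_succ,
          ← map_natCast (C (R := ℝ))]
        ring
      have hcoeff := congrArg (coeff m) hderiv
      rw [coeff_derivative, coeff_C_mul, map_add, ih, ih] at hcoeff
      rw [stirlingSecond_succ_succ]
      field_simp at hcoeff ⊢
      simp only [factorial_succ] at hcoeff ⊢
      push_cast at hcoeff ⊢
      linear_combination hcoeff

theorem sum_choose_mul_stirlingSecond_mul_stirlingSecond (n r j : ℕ) :
    ∑ i ∈ Finset.range (n + 1),
        (n.choose i : ℝ) * (r ! * stirlingSecond i r) * (j ! * stirlingSecond (n - i) j)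
      = (r + j)! * stirlingSecond n (r + j) := by
  have hcoeff := congrArg (coeff n) (pow_add expm1 r j)
  rw [coeff_mul, Finset.Nat.sum_antidiagonal_eq_sum_range_succ_mk, coeff_expm1_pow,
    div_eq_iff (by positivity)] at hcoeff
  rw [hcoeff, Finset.sum_mul]
  refine Finset.sum_congr rfl fun i hi => ?_
  rw [coeff_expm1_pow, coeff_expm1_pow, cast_choose ℝ (Finset.mem_range_succ_iff.1 hi)]
  field_simp

end ExpGeneratingFunction

section FPoly

open Nat Polynomial

theorem fPoly_eq_sum_range (n r : ℕ) :
    fPoly n r = C (r ! : ℝ) * ∑ k ∈ Finset.range (n + 1),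
      C ((n.choose k : ℝ) * stirlingSecond k r) * bellPoly (n - k) := by
  rw [fPoly, stirling2_eq_stirlingSecond]
  congr 1
  refine Finset.sum_subset (fun k hk => ?_) (fun k hk hkr => ?_)
  · rw [Finset.mem_Icc] at hk
    exact Finset.mem_range_succ_iff.2 hk.2
  · rw [Finset.mem_range_succ_iff] at hk
    rw [Finset.mem_Icc] at hkr
    rw [stirlingSecond_eq_zero_of_lt (by omega), cast_zero, mul_zero, C_0, zero_mul]

theorem fPoly_eq_iterate_derivative (n r : ℕ) : fPoly n r = derivative^[r] (bellPoly n) := by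
  ext j
  rw [coeff_iterate_derivative, coeff_bellPoly, fPoly_eq_sum_range, coeff_C_mul, finsetSum_coeff]
  simp only [coeff_C_mul, coeff_bellPoly]
  have hfac : (j ! * (r + j).descFactorial r : ℝ) = (r + j)! := by
    exact_mod_cast (add_tsub_cancel_left r j ▸ factorial_mul_descFactorial (le_add_right le_rfl))
  rw [nsmul_eq_mul, add_comm j r]
  refine mul_left_cancel₀ (cast_ne_zero.2 (factorial_ne_zero j)) ?_
  rw [← mul_assoc (j ! : ℝ) _ (stirlingSecond n (r + j) : ℝ), hfac,
    ← sum_choose_mul_stirlingSecond_mul_stirlingSecond, Finset.mul_sum, Finset.mul_sum]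
  exact Finset.sum_congr rfl fun _ _ => by ring

end FPoly

section EGF

open Nat PowerSeries

theorem eval_bellPoly_div_factorial (q : ℕ) (x : ℝ) :
    (bellPoly q).eval x / q ! =
      ∑ k ∈ Finset.range (q + 1), x ^ k / k ! * coeff q (expm1 ^ k) := by
  rw [Polynomial.eval_eq_sum_range, natDegree_bellPoly, Finset.sum_div]
  refine Finset.sum_congr rfl fun k _ => ?_
  rw [coeff_bellPoly, coeff_expm1_pow]
  field_simp

theorem egf_fPoly (r : ℕ) (x : ℝ) :
    mk (fun n => (fPoly n r).eval x / n !) =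
      expm1 ^ r * mk (fun n => (bellPoly n).eval x / n !) := by
  ext n
  rw [coeff_mk, coeff_mul, Finset.Nat.sum_antidiagonal_eq_sum_range_succ_mk, fPoly_eq_sum_range,
    Polynomial.eval_mul, Polynomial.eval_C, Polynomial.eval_finsetSum, Finset.mul_sum,
    Finset.sum_div]
  refine Finset.sum_congr rfl fun k hk => ?_
  rw [coeff_mk, coeff_expm1_pow, Polynomial.eval_mul, Polynomial.eval_C,
    cast_choose ℝ (Finset.mem_range_succ_iff.1 hk)]
  field_simp

end EGF

/-- For `r ≤ n` the polynomial `f_n^{(r)}` has only real zeros, and moreover its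
exponential generating function is `(e^t − 1)^r exp(x (e^t − 1))` (the exponential being
expanded as `∑_k x^k (e^t−1)^k / k!`). -/
theorem fPoly_real_rooted_and_egf :
    (∀ n r : ℕ, r ≤ n → RZ (fPoly n r)) ∧
      ∀ (r : ℕ) (x : ℝ),
        (PowerSeries.mk fun n => (fPoly n r).eval x / (n.factorial : ℝ))
          = expm1 ^ r *
            PowerSeries.mk (fun n => ∑ k ∈ Finset.range (n + 1),
              x ^ k / (k.factorial : ℝ) * PowerSeries.coeff n (expm1 ^ k)) := by
  refine ⟨fun n r hr => ?_, fun r x => ?_⟩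
  · rw [fPoly_eq_iterate_derivative]
    exact (rz_bellPoly n).iterate_derivative (by rwa [natDegree_bellPoly])
  · simp only [egf_fPoly, eval_bellPoly_div_factorial]
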